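/- arXiv:2307.09552 — 4 statements merged into one kernel-verified Lean document; each statement's English description precedes it below -/
import Mathlib

section
/- Let N₁, N₂, N₃ be independent, identically distributed real-valued random variables. Then the random vector (N₁ + N₃, N₁ + N₂ + 2N₃) has the same distribution as the random vector (N₁ + N₃, 2N₁ + N₂ + N₃). -/
open MeasureTheory ProbabilityTheory

/-! The vector `(N₃, N₂, N₁)` has the same law as `(N₁, N₂, N₃)`, namely the product of the common
marginal law, and substituting it into `(N₁ + N₃, N₁ + N₂ + 2 N₃)` yields
`(N₁ + N₃, 2 N₁ + N₂ + N₃)`. -/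

lemma ProbabilityTheory.iIndepFun.map_perm_eq {Ω ι α : Type*} [MeasurableSpace Ω]
    [MeasurableSpace α] [Fintype ι] {μ : Measure Ω} {ν : Measure α} {X : ι → Ω → α}
    (hX : ∀ i, AEMeasurable (X i) μ) (h : iIndepFun X μ) (hν : ∀ i, μ.map (X i) = ν)
    (σ : Equiv.Perm ι) :
    μ.map (fun ω i ↦ X (σ i) ω) = μ.map (fun ω i ↦ X i ω) := by
  rw [(h.precomp σ.injective).map_fun_eq_pi_map (fun i ↦ hX (σ i)), h.map_fun_eq_pi_map hX]
  simp only [hν]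

theorem stmt_2_general {Ω : Type*} [MeasurableSpace Ω] (μ : Measure Ω)
    (N₁ N₂ N₃ : Ω → ℝ) (h₁ : Measurable N₁) (h₂ : Measurable N₂) (h₃ : Measurable N₃)
    (hindep : iIndepFun ![N₁, N₂, N₃] μ)
    (hid12 : Measure.map N₁ μ = Measure.map N₂ μ)
    (hid13 : Measure.map N₁ μ = Measure.map N₃ μ) :
    Measure.map (fun ω => (N₁ ω + N₃ ω, N₁ ω + N₂ ω + 2 * N₃ ω)) μ
      = Measure.map (fun ω => (N₁ ω + N₃ ω, 2 * N₁ ω + N₂ ω + N₃ ω)) μ := by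
  set X := ![N₁, N₂, N₃]
  have hX : ∀ i, Measurable (X i) := fun i ↦ by fin_cases i <;> assumption
  have hlaw : ∀ i, μ.map (X i) = μ.map N₁ := fun i ↦ by fin_cases i <;> simp [X, ← hid12, ← hid13]
  have hswap := hindep.map_perm_eq (fun i ↦ (hX i).aemeasurable) hlaw (Equiv.swap 0 2)
  let g : (Fin 3 → ℝ) → ℝ × ℝ := fun x ↦ (x 0 + x 2, x 0 + x 1 + 2 * x 2)
  have hg : Measurable g := by fun_prop
  calc μ.map (fun ω ↦ (N₁ ω + N₃ ω, N₁ ω + N₂ ω + 2 * N₃ ω))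
      = (μ.map fun ω i ↦ X i ω).map g := by
        rw [Measure.map_map hg (measurable_pi_lambda _ hX)]; rfl
    _ = (μ.map fun ω i ↦ X (Equiv.swap 0 2 i) ω).map g := by rw [hswap]
    _ = μ.map (fun ω ↦ (N₁ ω + N₃ ω, 2 * N₁ ω + N₂ ω + N₃ ω)) := by
        rw [Measure.map_map hg (measurable_pi_lambda _ fun i ↦ hX _)]
        congr 1
        ext ω <;> simp [g, Equiv.swap_apply_of_ne_of_ne] <;> ring

theorem stmt_2 {Ω : Type*} [MeasurableSpace Ω] (μ : Measure Ω) [IsProbabilityMeasure μ]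
    (N₁ N₂ N₃ : Ω → ℝ) (h₁ : Measurable N₁) (h₂ : Measurable N₂) (h₃ : Measurable N₃)
    (hindep : iIndepFun ![N₁, N₂, N₃] μ)
    (hid12 : Measure.map N₁ μ = Measure.map N₂ μ)
    (hid13 : Measure.map N₁ μ = Measure.map N₃ μ) :
    Measure.map (fun ω => (N₁ ω + N₃ ω, N₁ ω + N₂ ω + 2 * N₃ ω)) μ
      = Measure.map (fun ω => (N₁ ω + N₃ ω, 2 * N₁ ω + N₂ ω + N₃ ω)) μ :=
  stmt_2_general μ N₁ N₂ N₃ h₁ h₂ h₃ hindep hid12 hid13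
end

section
/- Let X be a real-valued random variable and U a random variable uniformly distributed on [0,1], independent of X. Let F_{Y|x}(y) := P(Y ≤ y | X = x) be a conditional CDF (a Markov kernel from ℝ to ℝ given by CDFs), and define F⁻¹_{Y|x}(u) := inf{ y : F_{Y|x}(y) ≥ u }. Then the random vector (X, F⁻¹_{Y|X}(U)) has joint distribution equal to the distribution of (X, Y), where (X,Y) is any pair whose conditional distribution of Y given X = x has CDF F_{Y|x}. -/
/-!
For `u ∈ (0,1)` the generalised inverse of a cdf satisfies `F⁻¹(u) ≤ t ↔ u ≤ F(t)` (by
right-continuity of `F`), so pushing the uniform law on `[0,1]` forward by `F⁻¹_{Y|x}` gives back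
`κ x`. By independence the law of `(X, U)` is the product `μ_X × Unif[0,1]`, and the image of a
product under `(x, u) ↦ (x, f x u)` is `μ_X ⊗ₘ (x ↦ law of f x U)`, which here is
`μ_X ⊗ₘ κ = μ`.
-/

open MeasureTheory ProbabilityTheory Set Filter

namespace ProbabilityTheory

noncomputable def quantile (ν : Measure ℝ) (u : ℝ) : ℝ := sInf {y | u ≤ cdf ν y}

lemma quantile_le_iff (ν : Measure ℝ) [IsProbabilityMeasure ν] {u : ℝ} (hu : u ∈ Ioo 0 1)
    (t : ℝ) : quantile ν u ≤ t ↔ u ≤ cdf ν t := by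
  set S := {y | u ≤ cdf ν y}
  have hne : S.Nonempty := ((tendsto_cdf_atTop ν).eventually (eventually_ge_nhds hu.2)).exists
  have hbdd : BddBelow S := by
    obtain ⟨y₀, hy₀⟩ := ((tendsto_cdf_atBot ν).eventually (eventually_lt_nhds hu.1)).exists
    exact ⟨y₀, fun z hz => le_of_not_gt fun hzy =>
      (hz.trans_lt ((monotone_cdf ν hzy.le).trans_lt hy₀)).false⟩
  -- `S` is an up-set whose infimum it contains, by right-continuity of the cdf.
  have hmem : u ≤ cdf ν (sInf S) := by
    have hsub : Ioi (sInf S) ⊆ S := fun z hz => by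
      obtain ⟨w, hwS, hw⟩ := (csInf_lt_iff hbdd hne).mp hz
      exact hwS.trans (monotone_cdf ν hw.le)
    exact ge_of_tendsto
      (((cdf ν).right_continuous _).mono_left (nhdsWithin_mono _ Ioi_subset_Ici_self))
      (eventually_nhdsWithin_of_forall hsub)
  exact ⟨fun h => hmem.trans (monotone_cdf ν h), fun h => csInf_le hbdd h⟩

-- Outside the null set `(0,1)ᶜ` the quantile is replaced by `0` to make it jointly measurable.
lemma measurable_indicator_quantile (κ : Kernel ℝ ℝ) [IsMarkovKernel κ] :
    Measurable fun p : ℝ × ℝ => (Ioo 0 1).indicator (quantile (κ p.1)) p.2 := by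
  refine measurable_of_Iic fun t => ?_
  have hpre : (fun p : ℝ × ℝ => (Ioo 0 1).indicator (quantile (κ p.1)) p.2) ⁻¹' Iic t =
      {p | p.2 ∈ Ioo 0 1 ∧ p.2 ≤ cdf (κ p.1) t} ∪ {p | p.2 ∉ Ioo 0 1 ∧ 0 ≤ t} := by
    ext p
    by_cases hp : p.2 ∈ Ioo (0 : ℝ) 1
    · simp only [mem_preimage, mem_Iic, indicator_of_mem hp, quantile_le_iff _ hp, mem_union,
        mem_ofPred_eq, hp, true_and, not_true_eq_false, false_and, or_false]
    · simp only [mem_preimage, mem_Iic, indicator_of_notMem hp, mem_union, mem_ofPred_eq, hp,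
        false_and, false_or, not_false_eq_true, true_and]
  have hIoo : MeasurableSet {p : ℝ × ℝ | p.2 ∈ Ioo 0 1} := measurable_snd measurableSet_Ioo
  have hcdf : Measurable fun x => cdf (κ x) t := by
    simp_rw [cdf_eq_real, measureReal_def]
    exact (κ.measurable_coe measurableSet_Iic).ennreal_toReal
  rw [hpre]
  exact (hIoo.inter (measurableSet_le measurable_snd (hcdf.comp measurable_fst))).union
    (hIoo.compl.inter (MeasurableSet.const _))

lemma ae_mem_Ioo_restrict_Icc : ∀ᵐ u ∂(volume.restrict (Icc (0 : ℝ) 1)), u ∈ Ioo 0 1 := by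
  rw [Measure.restrict_congr_set Ioo_ae_eq_Icc.symm]
  exact ae_restrict_mem measurableSet_Ioo

lemma restrict_Icc_apply_Iic {c : ℝ} (hc : c ∈ Icc 0 1) :
    volume.restrict (Icc (0 : ℝ) 1) (Iic c) = ENNReal.ofReal c := by
  have hinter : Iic c ∩ Icc 0 1 = Icc 0 c := by
    ext u
    simp only [mem_inter_iff, mem_Iic, mem_Icc]
    exact ⟨fun h => ⟨h.2.1, h.1⟩, fun h => ⟨h.2, h.1, h.2.trans hc.2⟩⟩
  rw [Measure.restrict_apply measurableSet_Iic, hinter, Real.volume_Icc, sub_zero]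

lemma map_indicator_quantile (ν : Measure ℝ) [IsProbabilityMeasure ν] :
    (volume.restrict (Icc (0 : ℝ) 1)).map ((Ioo 0 1).indicator (quantile ν)) = ν := by
  have hm : Measurable ((Ioo 0 1).indicator (quantile ν)) :=
    (measurable_indicator_quantile (Kernel.const ℝ ν)).comp (measurable_prodMk_left (x := 0))
  refine Measure.ext_of_Iic _ _ fun t => ?_
  have hpre : (Ioo 0 1).indicator (quantile ν) ⁻¹' Iic t
      =ᵐ[volume.restrict (Icc (0 : ℝ) 1)] Iic (cdf ν t) := by
    rw [eventuallyEq_set]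
    filter_upwards [ae_mem_Ioo_restrict_Icc] with u hu
    rw [mem_preimage, mem_Iic, mem_Iic, indicator_of_mem hu, quantile_le_iff _ hu]
  rw [Measure.map_apply hm measurableSet_Iic, measure_congr hpre,
    restrict_Icc_apply_Iic ⟨cdf_nonneg ν t, cdf_le_one ν t⟩, ofReal_cdf]

end ProbabilityTheory

namespace MeasureTheory.Measure

lemma map_prod_eq_compProd {α β γ : Type*} [MeasurableSpace α] [MeasurableSpace β]
    [MeasurableSpace γ] (ρ : Measure α) [SFinite ρ] (ν : Measure β) [SFinite ν]
    (κ : Kernel α γ) [IsSFiniteKernel κ] {f : α → β → γ}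
    (hf : Measurable (Function.uncurry f))
    (hfκ : ∀ a, ν.map (f a) = κ a) :
    (ρ.prod ν).map (fun p => (p.1, f p.1 p.2)) = ρ ⊗ₘ κ := by
  have hT : Measurable fun p : α × β => (p.1, f p.1 p.2) := measurable_fst.prodMk hf
  ext s hs
  rw [map_apply hT hs, prod_apply (hT hs), compProd_apply hs]
  refine lintegral_congr fun a => ?_
  have hfa : Measurable (f a) := hf.comp measurable_prodMk_left
  rw [← hfκ a, map_apply hfa (measurable_prodMk_left hs)]
  rfl

end MeasureTheory.Measure

/-- Conditional inverse-transform sampling: if `U ~ Uniform[0,1]` is independent of `X`,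
the law of `X` is the first marginal of `μ`, and `κ` is a Markov kernel disintegrating
`μ` (the law of `(X,Y)`), with conditional CDFs `F x y = κ x (Iic y)`, then
`(X, F⁻¹_{Y|X}(U))` has law `μ`. -/
theorem stmt_10 {Ω : Type*} [MeasurableSpace Ω] (P : Measure Ω) [IsProbabilityMeasure P]
    (μ : Measure (ℝ × ℝ)) [IsProbabilityMeasure μ]
    (κ : Kernel ℝ ℝ) [IsMarkovKernel κ]
    (hdis : μ = μ.fst ⊗ₘ κ)
    (F : ℝ → ℝ → ℝ) (hF : ∀ x y, F x y = (κ x (Iic y)).toReal)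
    (Finv : ℝ → ℝ → ℝ) (hFinv : ∀ x u, Finv x u = sInf {y : ℝ | u ≤ F x y})
    (X U : Ω → ℝ) (hXm : Measurable X) (hUm : Measurable U)
    (hX : Measure.map X P = μ.fst)
    (hU : Measure.map U P = volume.restrict (Icc (0 : ℝ) 1))
    (hXU : IndepFun X U P) :
    Measure.map (fun ω => (X ω, Finv (X ω) (U ω))) P = μ := by
  have hFinv_eq : Finv = fun x => quantile (κ x) := by
    ext x u
    simp only [hFinv, hF, quantile, cdf_eq_real, measureReal_def]
  set g : ℝ → ℝ → ℝ := fun x => (Ioo 0 1).indicator (quantile (κ x))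
  have hg : Measurable (Function.uncurry g) := measurable_indicator_quantile κ
  have hU01 : ∀ᵐ ω ∂P, U ω ∈ Ioo 0 1 :=
    ae_of_ae_map hUm.aemeasurable (hU ▸ ae_mem_Ioo_restrict_Icc)
  have hae : (fun ω => (X ω, Finv (X ω) (U ω))) =ᵐ[P]
      (fun p => (p.1, g p.1 p.2)) ∘ fun ω => (X ω, U ω) := by
    filter_upwards [hU01] with ω hω
    simp only [hFinv_eq, Function.comp_apply, g, indicator_of_mem hω]
  have hlaw : P.map (fun ω => (X ω, U ω)) = μ.fst.prod (volume.restrict (Icc 0 1)) := by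
    rw [(indepFun_iff_map_prod_eq_prod_map_map hXm.aemeasurable hUm.aemeasurable).mp hXU, hX, hU]
  have hT : Measurable fun p : ℝ × ℝ => (p.1, g p.1 p.2) := measurable_fst.prodMk hg
  rw [Measure.map_congr hae, ← Measure.map_map hT (hXm.prodMk hUm), hlaw,
    Measure.map_prod_eq_compProd _ _ κ hg
      fun x => map_indicator_quantile (κ x), ← hdis]
end

section
/- Let G = (V, E) be a finite directed acyclic graph and S ⊆ T ⊆ V. Define the latent projection L(G, S) as the directed mixed graph on S containing a directed edge X→Y (for X, Y ∈ S) iff there is a directed path from X to Y in G all of whose intermediate nodes lie in V∖S, and a bidirected edge X↔Y iff there is a node L ∈ V∖S with directed paths from L to X and from L to Y whose intermediate nodes all lie in V∖S. Then the directed part of L(G, S) coincides with the directed part of L(L(G, T), S) restricted to directed-path reachability, i.e., for X, Y ∈ S there is a directed edge X→Y in L(G, S) iff there is a directed path from X to Y in L(G,T) whose intermediate nodes lie in T∖S. -/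
/-!
Cutting a path of `G` through `Sᶜ` at its nodes in `T` turns it into a path through `T \ S`
whose steps are paths through `Tᶜ`, i.e. edges of `L(G, T)`. Conversely, replacing each edge of
`L(G, T)` by the underlying path through `Tᶜ ⊆ Sᶜ` and gluing at the nodes of `T \ S ⊆ Sᶜ`
gives back a path through `Sᶜ`.
-/

/-- There is a directed path from `x` to `y` (w.r.t. the edge relation `E`)
all of whose intermediate nodes lie in `A`. -/
def DirPathAvoiding {V : Type*} (E : V → V → Prop) (A : Set V) (x y : V) : Prop :=
  ∃ l : List V, (∀ v ∈ l, v ∈ A) ∧ List.Chain E x (l ++ [y])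

namespace DirPathAvoiding

variable {V : Type*} {E R : V → V → Prop} {A B C : Set V} {x y z : V}

set_option linter.deprecated false in
theorem iff_head :
    DirPathAvoiding E A x y ↔ E x y ∨ ∃ z ∈ A, E x z ∧ DirPathAvoiding E A z y := by
  constructor
  · rintro ⟨_ | ⟨z, l⟩, hl, hc⟩
    · exact .inl (List.isChain_pair.1 hc)
    · obtain ⟨hxz, hc⟩ := List.isChain_cons_cons.1 hc
      exact .inr ⟨z, hl z List.mem_cons_self, hxz, l, fun v hv => hl v (.tail z hv), hc⟩
  · rintro (hxy | ⟨z, hz, hxz, l, hl, hc⟩)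
    · exact ⟨[], by simp, List.isChain_pair.2 hxy⟩
    · exact ⟨z :: l, List.forall_mem_cons.2 ⟨hz, hl⟩, List.isChain_cons_cons.2 ⟨hxz, hc⟩⟩

theorem single (h : E x y) : DirPathAvoiding E A x y :=
  iff_head.2 (.inl h)

theorem cons (hxz : E x z) (hz : z ∈ A) (h : DirPathAvoiding E A z y) :
    DirPathAvoiding E A x y :=
  iff_head.2 (.inr ⟨z, hz, hxz, h⟩)

set_option linter.deprecated false in
@[elab_as_elim]
theorem head_induction_on {motive : V → Prop} (h : DirPathAvoiding E A x y)
    (single : ∀ {a}, E a y → motive a)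
    (cons : ∀ {a z}, E a z → z ∈ A → DirPathAvoiding E A z y → motive z → motive a) :
    motive x := by
  obtain ⟨l, hl, hc⟩ := h
  induction l generalizing x with
  | nil => exact single (List.isChain_pair.1 hc)
  | cons z l ih =>
    obtain ⟨hxz, hc⟩ := List.isChain_cons_cons.1 hc
    have hl' : ∀ v ∈ l, v ∈ A := fun v hv => hl v (.tail z hv)
    exact cons hxz (hl z List.mem_cons_self) ⟨l, hl', hc⟩ (ih hl' hc)

theorem mono (hA : A ⊆ B) (h : DirPathAvoiding E A x y) : DirPathAvoiding E B x y :=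
  h.head_induction_on single fun hxz hz _ ih => ih.cons hxz (hA hz)

theorem trans (h₁ : DirPathAvoiding E A x z) (hz : z ∈ A) (h₂ : DirPathAvoiding E A z y) :
    DirPathAvoiding E A x y :=
  h₁.head_induction_on (fun hxz => h₂.cons hxz hz) fun hxw hw _ ih => ih.cons hxw hw

theorem of_head_imp (hR : ∀ w, R z w → R x w) (h : DirPathAvoiding R A z y) :
    DirPathAvoiding R A x y := by
  rcases iff_head.1 h with hzy | ⟨w, hw, hzw, hwy⟩
  · exact single (hR y hzy)
  · exact hwy.cons (hR w hzw) hw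

theorem split (h : DirPathAvoiding E (A ∪ B) x y) :
    DirPathAvoiding (DirPathAvoiding E B) A x y :=
  h.head_induction_on (fun hxy => single (single hxy)) fun haz hz _ ih =>
    hz.elim (fun hzA => ih.cons (single haz) hzA)
      -- an edge into `B` is absorbed into the first step of the path from `z`
      fun hzB => ih.of_head_imp fun _ hzw => hzw.cons haz hzB

theorem flatten (hR : ∀ a b, R a b → DirPathAvoiding E A a b) (hB : B ⊆ A)
    (h : DirPathAvoiding R B x y) : DirPathAvoiding E A x y :=
  h.head_induction_on (hR _ _) fun haz hz _ ih => (hR _ _ haz).trans (hB hz) ih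

theorem restrict (hA : A ⊆ C) (hx : x ∈ C) (hy : y ∈ C) (h : DirPathAvoiding R A x y) :
    DirPathAvoiding (fun a b => a ∈ C ∧ b ∈ C ∧ R a b) A x y := by
  revert hx
  exact h.head_induction_on (fun hay ha => single ⟨ha, hy, hay⟩)
    fun haz hz _ ih ha => (ih (hA hz)).cons ⟨ha, hA hz, haz⟩ hz

end DirPathAvoiding

theorem stmt_11_general {V : Type*} (E : V → V → Prop)
    (S T : Set V) (hST : S ⊆ T) (x y : V) (hx : x ∈ S) (hy : y ∈ S) :
    DirPathAvoiding E Sᶜ x y ↔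
      DirPathAvoiding (fun a b => a ∈ T ∧ b ∈ T ∧ DirPathAvoiding E Tᶜ a b)
        (T \ S) x y := by
  constructor
  · intro h
    have hsplit : Sᶜ ⊆ (T \ S) ∪ Tᶜ := fun v hv => (em (v ∈ T)).imp (fun hvT => ⟨hvT, hv⟩) id
    exact (h.mono hsplit).split.restrict Set.sdiff_subset (hST hx) (hST hy)
  · exact DirPathAvoiding.flatten (fun _ _ hab => hab.2.2.mono (Set.compl_subset_compl.2 hST))
      fun _ hv => hv.2

/-- Compositionality of the directed part of latent projections: for `S ⊆ T ⊆ V`,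
there is a directed edge `x → y` in `L(G,S)` iff there is a directed path from `x`
to `y` in `L(G,T)` whose intermediate nodes lie in `T \ S`. -/
theorem stmt_11 {V : Type*} [Fintype V] (E : V → V → Prop)
    (hacyclic : ∀ x, ¬ Relation.TransGen E x x)
    (S T : Set V) (hST : S ⊆ T) (x y : V) (hx : x ∈ S) (hy : y ∈ S) :
    DirPathAvoiding E Sᶜ x y ↔
      DirPathAvoiding (fun a b => a ∈ T ∧ b ∈ T ∧ DirPathAvoiding E Tᶜ a b)
        (T \ S) x y :=
  stmt_11_general E S T hST x y hx hy
end

section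
/- Let G be a finite DAG on vertices V and let i, j, k ∈ V with edges i→k and k→j in G. If in the latent projection L(G, V) (equivalently in G) there is no bidirected edge and additionally we require that adding an edge i→j would create, together with i→k, an inducing path between k and j relative to {i}, while adding j→i would create a directed cycle i→k→j→i, then: in any DAG G' on V that agrees with G on the edges i→k and k→j and contains no directed cycle, if additionally k→j must remain unconfounded by i (no common ancestor of k and j through i other than via k), there is no edge between i and j in G'. -/
theorem DirPathAvoiding.of_rel {V : Type*} {E : V → V → Prop} {A : Set V} {x y : V}
    (h : E x y) : DirPathAvoiding E A x y :=
  ⟨[], by simp, List.isChain_pair.mpr h⟩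

section Acyclic

variable {V : Type*} {E : V → V → Prop}

theorem ne_of_rel_of_acyclic (hacyclic : ∀ x, ¬ Relation.TransGen E x x) {x y : V}
    (h : E x y) : x ≠ y := by
  rintro rfl
  exact hacyclic x (.single h)

theorem not_rel_of_transGen_of_acyclic (hacyclic : ∀ x, ¬ Relation.TransGen E x x) {x y : V}
    (h : Relation.TransGen E x y) : ¬ E y x :=
  fun hyx => hacyclic x (h.tail hyx)

theorem not_rel_of_unconfounded (hacyclic : ∀ x, ¬ Relation.TransGen E x x) {i j k : V}
    (hik : E i k)
    (hunconf : ¬ ∃ c, c ≠ k ∧ Relation.TransGen E c k ∧ DirPathAvoiding E ({k}ᶜ : Set V) c j) :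
    ¬ E i j :=
  fun hij => hunconf ⟨i, ne_of_rel_of_acyclic hacyclic hik, .single hik, .of_rel hij⟩

end Acyclic

theorem stmt_17_general {V : Type*} (E' : V → V → Prop)
    (hacyclic : ∀ x, ¬ Relation.TransGen E' x x)
    (i j k : V) (hik : E' i k) (hkj : E' k j)
    (hunconf : ¬ ∃ c, c ≠ k ∧ Relation.TransGen E' c k ∧
      DirPathAvoiding E' ({k}ᶜ : Set V) c j) :
    ¬ E' i j ∧ ¬ E' j i :=
  ⟨not_rel_of_unconfounded hacyclic hik hunconf,
    not_rel_of_transGen_of_acyclic hacyclic ((Relation.TransGen.single hik).tail hkj)⟩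

/-- Graph-theoretic core of FCI merging: in any DAG `G'` containing the edges `i → k`
and `k → j`, if the edge `k → j` is unconfounded (no node `c ≠ k` is simultaneously an
ancestor of `k` and the start of a directed path to `j` avoiding `k`), then there is
no edge between `i` and `j`: `i → j` would make `i` a confounder of `k → j`, while
`j → i` would create the directed cycle `i → k → j → i`. -/
theorem stmt_17 {V : Type*} [Fintype V] (E' : V → V → Prop)
    (hacyclic : ∀ x, ¬ Relation.TransGen E' x x)
    (i j k : V) (hik : E' i k) (hkj : E' k j)
    (hunconf : ¬ ∃ c, c ≠ k ∧ Relation.TransGen E' c k ∧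
      DirPathAvoiding E' ({k}ᶜ : Set V) c j) :
    ¬ E' i j ∧ ¬ E' j i :=
  stmt_17_general E' hacyclic i j k hik hkj hunconf
end
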